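/- Let r ≥ 4 be real, u₀=0, u₁=1, u_{i+2}=(r−2)u_{i+1}−u_i, and ρ_r(n) = 1 + u_{n-1}/(u_n+1) for n ≥ 1. Then for every k ≥ 1, ρ_r(2k−1) = 1 + u_{k−1}/u_k. -/
import Mathlib


/-- ρ_r(2k−1) = 1 + u_{k−1}/u_k. -/
theorem stmt_7 (r : ℝ) (hr : 4 ≤ r)
    (u : ℕ → ℝ) (hu0 : u 0 = 0) (hu1 : u 1 = 1)
    (hurec : ∀ i, u (i + 2) = (r - 2) * u (i + 1) - u i)
    (rho : ℕ → ℝ)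
    (hrho : ∀ n : ℕ, 1 ≤ n → rho n = 1 + u (n - 1) / (u n + 1)) :
    ∀ k : ℕ, 1 ≤ k → rho (2 * k - 1) = 1 + u (k - 1) / u k := by
  -- monotonicity / positivity
  have hmono : ∀ k, 0 ≤ u k ∧ u k + 1 ≤ u (k + 1) := by
    intro k
    induction k with
    | zero => constructor <;> simp [hu0, hu1]
    | succ n ih =>
      obtain ⟨h0, h1⟩ := ih
      have hpos : 0 ≤ u (n + 1) := by linarith
      constructor
      · exact hpos
      · rw [hurec]; nlinarith
  have hpos : ∀ k, 0 < u (k + 1) := by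
    intro k; have := hmono k; linarith [this.1, this.2]
  -- Cassini identity
  have hcas : ∀ k, u (k + 1) * u (k + 1) - u k * u (k + 2) = 1 := by
    intro k
    induction k with
    | zero => simp [hu0, hu1]
    | succ n ih =>
      have h1 := hurec n
      have h2 := hurec (n + 1)
      linear_combination ih + u (n + 2) * h1 - u (n + 1) * h2
  -- doubling identities
  have hdbl : ∀ k, u (2 * k + 1) = u (k + 1) ^ 2 - u k ^ 2 ∧
      u (2 * k + 2) = u (k + 1) * (u (k + 2) - u k) := by
    intro k
    induction k with
    | zero =>
      constructor
      · simp [hu0, hu1]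
      · simp [hu0, hu1]
    | succ n ih =>
      obtain ⟨h1, h2⟩ := ih
      have e1 : 2 * (n + 1) + 1 = (2 * n + 1) + 2 := by ring
      have e2 : 2 * (n + 1) + 2 = (2 * n + 2) + 2 := by ring
      have hc := hurec n
      have hc2 := hurec (n + 1)
      constructor
      · rw [e1, hurec, h1, h2]
        linear_combination (u n - u (n + 2)) * hc
      · rw [e2, hurec, show (2*n+2)+1 = 2*(n+1)+1 by ring, h2]
        have h1' : u (2 * (n + 1) + 1) = u (n + 2) ^ 2 - u (n + 1) ^ 2 := by
          rw [e1, hurec, h1, h2]; linear_combination (u n - u (n + 2)) * hc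
        rw [h1']
        linear_combination u (n + 1) * hc - u (n + 2) * hc2
  intro k hk
  obtain ⟨j, rfl⟩ : ∃ j, k = j + 1 := ⟨k - 1, by omega⟩
  have hn : 2 * (j + 1) - 1 = 2 * j + 1 := by omega
  rw [hn, hrho (2 * j + 1) (by omega)]
  simp only [Nat.add_sub_cancel]
  congr 1
  obtain ⟨hd1, hd2⟩ := hdbl j
  have hden : 0 < u (2 * j + 1) + 1 := by
    rw [hd1]
    have := hmono j
    nlinarith [this.1, this.2]
  have hj1 : 0 < u (j + 1) := hpos j
  rw [div_eq_div_iff (ne_of_gt hden) (ne_of_gt hj1)]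
  -- u (2j) * u (j+1) = u j * (u (2j+1) + 1)
  rcases Nat.eq_zero_or_pos j with h0 | hjpos
  · subst h0; simp [hu0]
  · obtain ⟨i, rfl⟩ : ∃ i, j = i + 1 := ⟨j - 1, by omega⟩
    have hd2' := (hdbl i).2
    have hcs := hcas i
    rw [show 2 * (i + 1) = 2 * i + 2 by ring] at *
    rw [hd2', hd1]
    linear_combination u (i + 1) * hcs
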